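/- arXiv:1402.6733 — 4 statements merged into one kernel-verified Lean document; each statement's English description precedes it below -/
import Mathlib

section
/- For any n ≥ 1 and nonzero indeterminates p, q and a sequence y = (y_1,...,y_n), and any r ≥ 0, the complete homogeneous symmetric function satisfies h_r(p, -p⁻¹, y_1,...,y_n) - h_r(q, -q⁻¹, y_1,...,y_n) = (p - q)(1 + p⁻¹q⁻¹) · h_{r-1}(p, -p⁻¹, q, -q⁻¹, y_1,...,y_n), where h_{-1} is interpreted as 0. -/
open Finset

/-- Complete homogeneous symmetric polynomial of degree `r` evaluated at `x`. -/
noncomputable def hpoly {σ : Type*} [Fintype σ] [DecidableEq σ] {R : Type*} [CommRing R]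
    (x : σ → R) (r : ℕ) : R :=
  ∑ d ∈ (Finset.univ : Finset (σ → Fin (r + 1))).filter (fun d => ∑ i, (d i : ℕ) = r),
    ∏ i, x i ^ ((d i : ℕ))

/-- `hpoly` with integer index, zero for negative degrees (so `h₋₁ = 0`). -/
noncomputable def hpolyZ {σ : Type*} [Fintype σ] [DecidableEq σ] {R : Type*} [CommRing R]
    (x : σ → R) (k : ℤ) : R :=
  if 0 ≤ k then hpoly x k.toNat else 0

/-- A recursion-friendly version of `hpoly` over `Fin m`. -/
noncomputable def H {R : Type*} [CommRing R] {m : ℕ} (x : Fin m → R) (r : ℕ) : R :=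
  ∑ d ∈ Finset.finAntidiagonal m r, ∏ i, x i ^ d i

lemma hpoly_eq_H {R : Type*} [CommRing R] {m : ℕ} (x : Fin m → R) (r : ℕ) :
    hpoly x r = H x r := by
  unfold hpoly H
  refine Finset.sum_nbij' (fun d i => (d i : ℕ))
    (fun d i => (⟨min (d i) r, by omega⟩ : Fin (r+1))) ?_ ?_ ?_ ?_ ?_
  · intro d hd
    simp only [Finset.mem_filter] at hd
    simp [hd.2]
  · intro d hd
    simp only [Finset.mem_finAntidiagonal] at hd
    have hle : ∀ i, d i ≤ r := by
      intro i
      calc d i ≤ ∑ i, d i :=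
            Finset.single_le_sum (f := d) (fun _ _ => Nat.zero_le _) (Finset.mem_univ i)
        _ = r := hd
    simp only [Finset.mem_filter, Finset.mem_univ, true_and]
    have h2 : ∀ i ∈ Finset.univ, ((⟨min (d i) r, by omega⟩ : Fin (r+1)) : ℕ) = d i := by
      intro i _; simp [min_eq_left (hle i)]
    rw [Finset.sum_congr rfl h2, hd]
  · intro d hd
    simp only [Finset.mem_filter] at hd
    have hle : ∀ i, (d i : ℕ) ≤ r := by
      intro i
      calc (d i : ℕ) ≤ ∑ i, (d i : ℕ) :=
            Finset.single_le_sum (f := fun i => (d i : ℕ)) (fun _ _ => Nat.zero_le _)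
              (Finset.mem_univ i)
        _ = r := hd.2
    funext i
    ext
    simp [min_eq_left (hle i)]
  · intro d hd
    simp only [Finset.mem_finAntidiagonal] at hd
    have hle : ∀ i, d i ≤ r := by
      intro i
      calc d i ≤ ∑ i, d i :=
            Finset.single_le_sum (f := d) (fun _ _ => Nat.zero_le _) (Finset.mem_univ i)
        _ = r := hd
    funext i
    simp [min_eq_left (hle i)]
  · intro d _; rfl

lemma H_zero {R : Type*} [CommRing R] {m : ℕ} (x : Fin m → R) : H x 0 = 1 := by
  have h : Finset.finAntidiagonal m (0:ℕ) = {0} := by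
    ext f
    simp [Finset.mem_finAntidiagonal, Finset.sum_eq_zero_iff, funext_iff]
  simp [H, h]

lemma H_cons {R : Type*} [CommRing R] {m : ℕ} (a : R) (x : Fin m → R) (r : ℕ) :
    H (Fin.cons a x) r = ∑ j ∈ Finset.range (r+1), a ^ j * H x (r - j) := by
  unfold H
  simp_rw [Finset.mul_sum]
  rw [Finset.sum_sigma']
  refine Finset.sum_nbij' (fun d => ⟨d 0, Fin.tail d⟩) (fun s => Fin.cons s.1 s.2) ?_ ?_ ?_ ?_ ?_
  · intro d hd
    simp only [Finset.mem_finAntidiagonal] at hd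
    rw [Fin.sum_univ_succ] at hd
    simp only [Finset.mem_sigma, Finset.mem_range, Finset.mem_finAntidiagonal]
    constructor
    · omega
    · have : ∑ i, Fin.tail d i = ∑ i : Fin m, d i.succ := rfl
      omega
  · intro s hs
    simp only [Finset.mem_sigma, Finset.mem_range, Finset.mem_finAntidiagonal] at hs
    simp only [Finset.mem_finAntidiagonal]
    rw [Fin.sum_univ_succ]
    simp only [Fin.cons_zero, Fin.cons_succ]
    have : ∑ i : Fin m, s.2 i = r - s.1 := hs.2
    omega
  · intro d _
    simp [Fin.cons_self_tail]
  · intro s _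
    simp [Fin.tail_cons]
  · intro d _
    rw [Fin.prod_univ_succ]
    simp [Fin.tail]

lemma H_rec {R : Type*} [CommRing R] {m : ℕ} (a : R) (x : Fin m → R) (r : ℕ) :
    H (Fin.cons a x) (r+1) = a * H (Fin.cons a x) r + H x (r+1) := by
  rw [H_cons a x (r+1), H_cons a x r, Finset.sum_range_succ', Finset.mul_sum]
  simp only [pow_zero, one_mul, Nat.sub_zero]
  congr 1
  refine Finset.sum_congr rfl fun j hj => ?_
  rw [Nat.succ_sub_succ]
  ring

lemma H_diff {R : Type*} [CommRing R] {m : ℕ} (a b : R) (z : Fin m → R) (r : ℕ) :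
    H (Fin.cons a z) (r+1) - H (Fin.cons b z) (r+1)
      = (a - b) * H (Fin.cons a (Fin.cons b z)) r := by
  induction r with
  | zero =>
      rw [H_rec, H_rec, H_zero, H_zero, H_zero]
      ring
  | succ r ih =>
      have e1 := H_rec a z (r+1)
      have e2 := H_rec b z (r+1)
      have e3 := H_rec a (Fin.cons b z) r
      linear_combination e1 - e2 - (a-b)*e3 + a*ih

lemma H_swap {R : Type*} [CommRing R] {m : ℕ} (a b : R) (z : Fin m → R) (r : ℕ) :
    H (Fin.cons a (Fin.cons b z)) r = H (Fin.cons b (Fin.cons a z)) r := by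
  induction r with
  | zero => rw [H_zero, H_zero]
  | succ r ih =>
      have e1 := H_rec a (Fin.cons b z) r
      have e2 := H_rec b (Fin.cons a z) r
      have h := H_diff a b z r
      linear_combination e1 - e2 - h + b * ih

lemma H_congr_tail {R : Type*} [CommRing R] {m m' : ℕ} (a : R) (w : Fin m → R)
    (w' : Fin m' → R) (hw : ∀ s, H w s = H w' s) (r : ℕ) :
    H (Fin.cons a w) r = H (Fin.cons a w') r := by
  rw [H_cons, H_cons]
  exact Finset.sum_congr rfl fun j _ => by rw [hw]

lemma H_perm4 {R : Type*} [CommRing R] {m : ℕ} (a b c d : R) (y : Fin m → R) (r : ℕ) :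
    H (Fin.cons a (Fin.cons b (Fin.cons c (Fin.cons d y)))) r
      = H (Fin.cons c (Fin.cons d (Fin.cons a (Fin.cons b y)))) r :=
  calc H (Fin.cons a (Fin.cons b (Fin.cons c (Fin.cons d y)))) r
      = H (Fin.cons a (Fin.cons c (Fin.cons b (Fin.cons d y)))) r :=
        H_congr_tail a _ _ (fun s => H_swap b c (Fin.cons d y) s) r
    _ = H (Fin.cons c (Fin.cons a (Fin.cons b (Fin.cons d y)))) r :=
        H_swap a c _ r
    _ = H (Fin.cons c (Fin.cons a (Fin.cons d (Fin.cons b y)))) r :=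
        H_congr_tail c _ _
          (fun s => H_congr_tail a _ _ (fun s' => H_swap b d y s') s) r
    _ = H (Fin.cons c (Fin.cons d (Fin.cons a (Fin.cons b y)))) r :=
        H_congr_tail c _ _ (fun s => H_swap a d (Fin.cons b y) s) r

/-- Lemma A.2: `h_r(p,-p⁻¹,y) - h_r(q,-q⁻¹,y) = (p-q)(1+p⁻¹q⁻¹) h_{r-1}(p,-p⁻¹,q,-q⁻¹,y)`. -/
theorem hr_difference {K : Type*} [Field K] {n : ℕ} (hn : 1 ≤ n)
    (p q : K) (hp : p ≠ 0) (hq : q ≠ 0) (y : Fin n → K) (r : ℕ) :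
    hpoly (Fin.cons p (Fin.cons (-p⁻¹) y) : Fin (n + 2) → K) r -
      hpoly (Fin.cons q (Fin.cons (-q⁻¹) y) : Fin (n + 2) → K) r =
    (p - q) * (1 + p⁻¹ * q⁻¹) *
      hpolyZ (Fin.cons p (Fin.cons (-p⁻¹) (Fin.cons q (Fin.cons (-q⁻¹) y))) :
        Fin (n + 4) → K) ((r : ℤ) - 1) := by
  rw [hpoly_eq_H, hpoly_eq_H]
  obtain _ | s := r
  · norm_num [hpolyZ, H_zero]
  · have hz : hpolyZ (Fin.cons p (Fin.cons (-p⁻¹) (Fin.cons q (Fin.cons (-q⁻¹) y))) :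
        Fin (n + 4) → K) (((s+1 : ℕ) : ℤ) - 1)
        = H (Fin.cons p (Fin.cons (-p⁻¹) (Fin.cons q (Fin.cons (-q⁻¹) y)))) s := by
      have h1 : ((s+1 : ℕ) : ℤ) - 1 = (s : ℤ) := by push_cast; ring
      rw [h1, hpolyZ, if_pos (Int.natCast_nonneg s), Int.toNat_natCast, hpoly_eq_H]
    rw [hz]
    obtain _ | t := s
    · have e1 := H_rec p (Fin.cons (-p⁻¹) y) 0
      have e2 := H_rec (-p⁻¹) y 0
      have e3 := H_rec q (Fin.cons (-q⁻¹) y) 0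
      have e4 := H_rec (-q⁻¹) y 0
      simp only [H_zero, mul_one] at e1 e2 e3 e4
      rw [e1, e2, e3, e4, H_zero]
      field_simp
      ring
    · have hp1 : p * p⁻¹ = 1 := mul_inv_cancel₀ hp
      have hq1 : q * q⁻¹ = 1 := mul_inv_cancel₀ hq
      have c1 := H_rec p (Fin.cons (-p⁻¹) (Fin.cons q (Fin.cons (-q⁻¹) y))) (t+1)
      have c2 := H_rec (-p⁻¹) (Fin.cons q (Fin.cons (-q⁻¹) y)) (t+1)
      have c3 := H_rec p (Fin.cons (-p⁻¹) (Fin.cons q (Fin.cons (-q⁻¹) y))) t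
      have c1' := H_rec q (Fin.cons (-q⁻¹) (Fin.cons p (Fin.cons (-p⁻¹) y))) (t+1)
      have c2' := H_rec (-q⁻¹) (Fin.cons p (Fin.cons (-p⁻¹) y)) (t+1)
      have c3' := H_rec q (Fin.cons (-q⁻¹) (Fin.cons p (Fin.cons (-p⁻¹) y))) t
      have hperm : ∀ u, H (Fin.cons q (Fin.cons (-q⁻¹) (Fin.cons p (Fin.cons (-p⁻¹) y)))) u
          = H (Fin.cons p (Fin.cons (-p⁻¹) (Fin.cons q (Fin.cons (-q⁻¹) y)))) u :=
        fun u => H_perm4 q (-q⁻¹) p (-p⁻¹) y u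
      simp only [hperm] at c1' c3'
      linear_combination (-1)*c1' - c2' + (-q⁻¹)*c3' + c1 + c2 + p⁻¹*c3
        + (H (Fin.cons p (Fin.cons (-p⁻¹) (Fin.cons q (Fin.cons (-q⁻¹) y)))) t) * (hp1 - hq1)
        + (H (Fin.cons p (Fin.cons (-p⁻¹) (Fin.cons q (Fin.cons (-q⁻¹) y)))) (t+1))
            * (p⁻¹*hq1 - q⁻¹*hp1)
end

section
/- For n ≥ 1 and indeterminates c = (c_1, ..., c_{n+1}), the n×n determinant det_{1≤k,ℓ≤n}( e_{k-ℓ}(c) + (-1)^{ℓ-1} e_{k+ℓ}(c) ) equals ∏_{1≤i<j≤n+1} (1 + c_i c_j). -/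
/-!
Induct on the number of variables. Split off the last variable `γ`, write `c'` for the others and
`M(c)` for the matrix. Expanding `e_r(c) = e_r(c') + γ e_{r-1}(c')` gives
`M(c) = (1 + γ S) (M(c') + u vᵀ)`, where `S` is the subdiagonal shift,
`v_ℓ = (-1)^ℓ e_{ℓ+1}(c')` and `u_k = γ (-γ)^k`. The row vector `v` is fixed by `M(c')`, so
`M(c') + u vᵀ = (1 + u vᵀ) M(c')`, and `det (1 + u vᵀ) = 1 + v ⬝ u = ∏ᵢ (1 + c'ᵢ γ)`. Once the
matrix is as large as the number of variables, its last column is a unit vector, so `det M(c')`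
drops to the smaller matrix of the induction hypothesis.
-/

open Finset

/-- Elementary symmetric polynomial of degree `r` evaluated at `x`. -/
noncomputable def epoly {σ : Type*} [Fintype σ] [DecidableEq σ] {R : Type*} [CommRing R]
    (x : σ → R) (r : ℕ) : R :=
  ∑ s ∈ Finset.univ.powersetCard r, ∏ i ∈ s, x i

/-- `epoly` with integer index, zero for negative degrees. -/
noncomputable def epolyZ {σ : Type*} [Fintype σ] [DecidableEq σ] {R : Type*} [CommRing R]
    (x : σ → R) (k : ℤ) : R :=
  if 0 ≤ k then epoly x k.toNat else 0

section

open Matrix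

variable {R : Type*} [CommRing R]

lemma Multiset.esymm_cons_succ {S : Type*} [CommSemiring S] (a : S) (s : Multiset S) (r : ℕ) :
    (a ::ₘ s).esymm (r + 1) = s.esymm (r + 1) + a * s.esymm r := by
  simp [Multiset.esymm, Multiset.powersetCard_cons, Multiset.sum_map_mul_left]

lemma Fin.prod_prod_filter_lt_succ {M : Type*} [CommMonoid M] {m : ℕ}
    (f : Fin (m + 1) → Fin (m + 1) → M) :
    ∏ i, ∏ j ∈ univ.filter (fun j => i < j), f i j =
      (∏ i : Fin m, ∏ j ∈ univ.filter (fun j => i < j), f i.castSucc j.castSucc) *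
        ∏ i : Fin m, f i.castSucc (Fin.last m) := by
  simp only [prod_filter, Fin.prod_univ_castSucc, Fin.castSucc_lt_castSucc_iff,
    Fin.castSucc_lt_last, if_true, (Fin.le_last _).not_gt, if_false, prod_const_one, mul_one,
    prod_mul_distrib]

section subdiagonal

def subdiagonal (n : ℕ) (γ : R) : Matrix (Fin n) (Fin n) R :=
  of fun k j => if (j : ℕ) + 1 = k then γ else 0

variable {n : ℕ} (γ : R)

lemma det_one_add_subdiagonal : det (1 + subdiagonal n γ) = 1 := by
  rw [det_of_isLowerTriangular]
  · exact prod_eq_one fun k _ => by simp [subdiagonal]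
  · intro k j (hkj : k < j)
    have := Fin.lt_def.mp hkj
    simp [subdiagonal, one_apply_ne hkj.ne, show (j : ℕ) + 1 ≠ k by omega]

lemma one_add_subdiagonal_mul_apply_zero (A : Matrix (Fin (n + 1)) (Fin (n + 1)) R)
    (l : Fin (n + 1)) : ((1 + subdiagonal (n + 1) γ) * A) 0 l = A 0 l := by
  rw [add_mul, one_mul, Matrix.add_apply, mul_apply,
    sum_eq_zero fun j _ => by simp [subdiagonal], add_zero]

lemma one_add_subdiagonal_mul_apply_succ (A : Matrix (Fin (n + 1)) (Fin (n + 1)) R)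
    (k : Fin n) (l : Fin (n + 1)) :
    ((1 + subdiagonal (n + 1) γ) * A) k.succ l = A k.succ l + γ * A k.castSucc l := by
  rw [add_mul, one_mul, Matrix.add_apply, mul_apply, Fintype.sum_eq_single k.castSucc]
  · simp [subdiagonal]
  · intro j hj
    simp only [subdiagonal, of_apply, Fin.val_succ, add_left_inj, ite_mul, zero_mul]
    exact if_neg fun hjk => hj (Fin.ext hjk)

end subdiagonal

section epoly

variable {σ : Type*} [Fintype σ] [DecidableEq σ] (x : σ → R)

lemma epoly_eq_esymm (r : ℕ) : epoly x r = (univ.val.map x).esymm r :=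
  (Finset.esymm_map_val x univ r).symm

@[simp] lemma epoly_zero : epoly x 0 = 1 := by
  simp [epoly]

lemma epoly_eq_zero_of_card_lt {r : ℕ} (h : Fintype.card σ < r) : epoly x r = 0 := by
  rw [epoly, powersetCard_eq_empty.mpr (by rwa [Finset.card_univ]), sum_empty]

@[simp] lemma epolyZ_natCast (r : ℕ) : epolyZ x r = epoly x r := by
  simp [epolyZ]

lemma epolyZ_of_neg {k : ℤ} (h : k < 0) : epolyZ x k = 0 := by
  simp [epolyZ, h]

lemma prod_one_add_mul_eq_sum_epoly {N : ℕ} (h : Fintype.card σ ≤ N) (γ : R) :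
    ∏ i, (1 + x i * γ) = ∑ k ∈ range (N + 1), epoly x k * γ ^ k := by
  rw [Finset.prod_one_add, ← sum_fiberwise_of_maps_to (g := card) (t := range (N + 1))]
  · refine sum_congr rfl fun k _ => ?_
    rw [← powersetCard_eq_filter, epoly, sum_mul]
    refine sum_congr rfl fun t ht => ?_
    rw [prod_mul_distrib, prod_const, (mem_powersetCard.mp ht).2]
  · intro t _
    exact mem_range.mpr (Nat.lt_succ_of_le ((card_le_univ t).trans h))

/-- Both halves of the sum are, up to sign, tails of `∑ᵢ (-1)^i e_i e_{L+1+i}`: the first one the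
whole sum, the second one the sum without its `i = 0` term. -/
lemma sum_range_signed_epoly_mul_column {N : ℕ} (h : Fintype.card σ ≤ N) (L : ℕ) :
    ∑ j ∈ range N, (-1 : R) ^ j * epoly x (j + 1) *
        (epolyZ x ((j : ℤ) - L) + (-1 : R) ^ L * epoly x (j + L + 2)) =
      (-1 : R) ^ L * epoly x (L + 1) := by
  set f : ℕ → R := fun i => (-1 : R) ^ i * epoly x i * epoly x (L + 1 + i)
  have hfirst : ∑ j ∈ range N, (-1 : R) ^ j * epoly x (j + 1) * epolyZ x ((j : ℤ) - L) =
      (-1 : R) ^ L * ∑ i ∈ range (N + 1), f i := by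
    rw [← eventually_constant_sum (n := L + (N + 1)) _ (by omega), sum_range_add,
      sum_eq_zero fun j hj => ?_, zero_add, mul_sum]
    · refine sum_congr rfl fun i _ => ?_
      rw [show ((L + i : ℕ) : ℤ) - L = (i : ℕ) by omega, epolyZ_natCast, pow_add,
        show L + i + 1 = L + 1 + i by omega]
      ring
    · rw [epolyZ_of_neg x (by simp at hj; omega), mul_zero]
    · intro j hj
      rw [epoly_eq_zero_of_card_lt x (by omega), mul_zero, zero_mul]
  have hsecond : ∑ j ∈ range N, (-1 : R) ^ j * epoly x (j + 1) * epoly x (j + L + 2) =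
      -∑ j ∈ range N, f (j + 1) := by
    rw [← sum_neg_distrib]
    refine sum_congr rfl fun j _ => ?_
    dsimp only [f]
    rw [show L + 1 + (j + 1) = j + L + 2 by omega, pow_succ]
    ring
  rw [sum_range_succ'] at hfirst
  calc _ = ∑ j ∈ range N, (-1 : R) ^ j * epoly x (j + 1) * epolyZ x ((j : ℤ) - L) +
        (-1 : R) ^ L * ∑ j ∈ range N, (-1 : R) ^ j * epoly x (j + 1) * epoly x (j + L + 2) := by
        rw [mul_sum, ← sum_add_distrib]
        exact sum_congr rfl fun j _ => by ring
    _ = (-1 : R) ^ L * f 0 := by rw [hfirst, hsecond]; ring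
    _ = _ := by simp [f]

end epoly

lemma epoly_succ {m : ℕ} (c : Fin (m + 1) → R) (r : ℕ) :
    epoly c (r + 1) = epoly (Fin.init c) (r + 1) + c (Fin.last m) * epoly (Fin.init c) r := by
  simp only [epoly_eq_esymm, Fin.univ_castSuccEmb, Finset.cons_val, Multiset.map_cons, map_val,
    Multiset.map_map]
  exact Multiset.esymm_cons_succ _ _ _

lemma epolyZ_eq_add {m : ℕ} (c : Fin (m + 1) → R) (k : ℤ) :
    epolyZ c k = epolyZ (Fin.init c) k + c (Fin.last m) * epolyZ (Fin.init c) (k - 1) := by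
  rcases lt_or_ge k 0 with hk | hk
  · simp [epolyZ_of_neg, hk, show k - 1 < 0 by omega]
  obtain ⟨r, rfl⟩ := Int.eq_ofNat_of_zero_le hk
  cases r with
  | zero => simp [epolyZ]
  | succ r =>
    rw [show ((r + 1 : ℕ) : ℤ) - 1 = (r : ℕ) by omega]
    simpa only [epolyZ_natCast] using epoly_succ c r

section epolyMatrix

variable {σ : Type*} [Fintype σ] [DecidableEq σ] (x : σ → R) (n : ℕ)

noncomputable def epolyMatrix : Matrix (Fin n) (Fin n) R :=
  of fun k l => epolyZ x ((k : ℤ) - (l : ℕ)) + (-1 : R) ^ (l : ℕ) * epoly x ((k : ℕ) + (l : ℕ) + 2)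

noncomputable def signedEpolyVec : Fin n → R :=
  fun l => (-1 : R) ^ (l : ℕ) * epoly x ((l : ℕ) + 1)

variable {x n}

lemma signedEpolyVec_vecMul_epolyMatrix (h : Fintype.card σ ≤ n) :
    signedEpolyVec x n ᵥ* epolyMatrix x n = signedEpolyVec x n := by
  ext l
  simp only [vecMul, dotProduct, epolyMatrix, of_apply, signedEpolyVec]
  rw [Fin.sum_univ_eq_sum_range (fun j => (-1 : R) ^ j * epoly x (j + 1) *
    (epolyZ x ((j : ℤ) - (l : ℕ)) + (-1 : R) ^ (l : ℕ) * epoly x (j + (l : ℕ) + 2))) n]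
  exact sum_range_signed_epoly_mul_column x h l

lemma epolyMatrix_apply_last (h : Fintype.card σ ≤ n + 1) (k : Fin (n + 1)) :
    epolyMatrix x (n + 1) k (Fin.last n) = if k = Fin.last n then 1 else 0 := by
  rw [epolyMatrix, of_apply, epoly_eq_zero_of_card_lt x (by simp; omega), mul_zero, add_zero]
  split_ifs with hk
  · simp [hk, epolyZ]
  · exact epolyZ_of_neg x (by have := Fin.val_lt_last hk; simp; omega)

lemma det_epolyMatrix_succ (h : Fintype.card σ ≤ n + 1) :
    det (epolyMatrix x (n + 1)) = det (epolyMatrix x n) := by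
  rw [det_succ_column _ (Fin.last n),
    Fintype.sum_eq_single (Fin.last n) fun k hk => by simp [epolyMatrix_apply_last h, hk]]
  simp only [epolyMatrix_apply_last h, if_true, mul_one, Fin.succAbove_last, Fin.val_last,
    (Even.add_self n).neg_one_pow, one_mul]
  rfl

lemma det_one_add_vecMulVec_signedEpolyVec (h : Fintype.card σ ≤ n) (γ : R) :
    det (1 + vecMulVec (fun k : Fin n => γ * (-γ) ^ (k : ℕ)) (signedEpolyVec x n)) =
      ∏ i, (1 + x i * γ) := by
  rw [vecMulVec_eq (Fin 1), det_one_add_replicateCol_mul_replicateRow,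
    prod_one_add_mul_eq_sum_epoly x h, sum_range_succ', dotProduct]
  simp only [signedEpolyVec]
  rw [Fin.sum_univ_eq_sum_range (fun i => (-1 : R) ^ i * epoly x (i + 1) * (γ * (-γ) ^ i)) n]
  simp only [epoly_zero, pow_zero, mul_one, add_comm (1 : R)]
  refine congrArg (· + 1) (sum_congr rfl fun i _ => ?_)
  have hsign : (-1 : R) ^ i * (-1) ^ i = 1 := by rw [← mul_pow]; simp
  rw [neg_pow γ, pow_succ]
  linear_combination (epoly x (i + 1) * γ ^ i * γ) * hsign

end epolyMatrix

lemma epolyMatrix_eq_one_add_subdiagonal_mul {m n : ℕ} (c : Fin (m + 1) → R) :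
    epolyMatrix c (n + 1) = (1 + subdiagonal (n + 1) (c (Fin.last m))) *
      (epolyMatrix (Fin.init c) (n + 1) +
        vecMulVec (fun k : Fin (n + 1) => c (Fin.last m) * (-c (Fin.last m)) ^ (k : ℕ))
          (signedEpolyVec (Fin.init c) (n + 1))) := by
  ext k l
  induction k using Fin.cases with
  | zero =>
    rw [one_add_subdiagonal_mul_apply_zero]
    simp only [epolyMatrix, signedEpolyVec, of_apply, Matrix.add_apply, vecMulVec_apply,
      Fin.val_zero, Nat.cast_zero, zero_sub, zero_add]
    rw [epolyZ_eq_add c, epolyZ_of_neg _ (show -((l : ℕ) : ℤ) - 1 < 0 by omega), epoly_succ]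
    ring
  | succ k =>
    rw [one_add_subdiagonal_mul_apply_succ]
    simp only [epolyMatrix, signedEpolyVec, of_apply, Matrix.add_apply, vecMulVec_apply,
      Fin.val_succ, Fin.val_castSucc]
    rw [epolyZ_eq_add c,
      show ((k + 1 : ℕ) : ℤ) - (l : ℕ) - 1 = (k : ℕ) - (l : ℕ) by push_cast; ring,
      show (k : ℕ) + 1 + l + 2 = (k + l + 2) + 1 by omega, epoly_succ]
    ring

lemma det_epolyMatrix_eq_prod_mul {m n : ℕ} (hmn : m ≤ n + 1) (c : Fin (m + 1) → R) :
    det (epolyMatrix c (n + 1)) =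
      (∏ i, (1 + Fin.init c i * c (Fin.last m))) * det (epolyMatrix (Fin.init c) (n + 1)) := by
  have hcard : Fintype.card (Fin m) ≤ n + 1 := by simpa using hmn
  set u : Fin (n + 1) → R := fun k => c (Fin.last m) * (-c (Fin.last m)) ^ (k : ℕ)
  set v := signedEpolyVec (Fin.init c) (n + 1)
  have hfix : epolyMatrix (Fin.init c) (n + 1) + vecMulVec u v =
      (1 + vecMulVec u v) * epolyMatrix (Fin.init c) (n + 1) := by
    rw [Matrix.add_mul, Matrix.one_mul, vecMulVec_mul, signedEpolyVec_vecMul_epolyMatrix hcard]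
  rw [epolyMatrix_eq_one_add_subdiagonal_mul, hfix, det_mul, det_mul, det_one_add_subdiagonal,
    one_mul, det_one_add_vecMulVec_signedEpolyVec hcard]

end

/-- Rows and columns are `0`-indexed: `k, l : Fin n` stand for the paper's `k + 1, ℓ + 1`. -/
theorem det_esymm_eq_prod_general {R : Type*} [CommRing R] {n : ℕ}
    (c : Fin (n + 1) → R) :
    Matrix.det (Matrix.of fun k l : Fin n =>
        epolyZ c ((k : ℤ) - (l : ℕ)) + (-1 : R) ^ (l : ℕ) * epoly c ((k : ℕ) + (l : ℕ) + 2)) =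
      ∏ i : Fin (n + 1), ∏ j ∈ Finset.univ.filter (fun j => i < j), (1 + c i * c j) := by
  change Matrix.det (epolyMatrix c n) = _
  induction n with
  | zero => simp [filter_singleton]
  | succ n ih =>
    rw [det_epolyMatrix_eq_prod_mul le_rfl, det_epolyMatrix_succ (by simp), ih,
      Fin.prod_prod_filter_lt_succ fun i j => 1 + c i * c j, mul_comm]
    rfl

/-- Lemma A.3: `det( e_{k-ℓ}(c) + (-1)^{ℓ-1} e_{k+ℓ}(c) ) = ∏_{i<j} (1 + cᵢcⱼ)`.
Here rows/columns are `0`-indexed (`k,ℓ : Fin n` with 1-indexed values `k+1, ℓ+1`). -/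
theorem det_esymm_eq_prod {R : Type*} [CommRing R] {n : ℕ} (hn : 1 ≤ n)
    (c : Fin (n + 1) → R) :
    Matrix.det (Matrix.of fun k l : Fin n =>
        epolyZ c ((k : ℤ) - (l : ℕ)) + (-1 : R) ^ (l : ℕ) * epoly c ((k : ℕ) + (l : ℕ) + 2)) =
      ∏ i : Fin (n + 1), ∏ j ∈ Finset.univ.filter (fun j => i < j), (1 + c i * c j) :=
  det_esymm_eq_prod_general c
end

section
/- For k between 1 and n and nonzero parameters x_i, y_i, z_0, the identity z_0 x_k ∏_{i=k+1}^n (x_i y_i^{-1}) = u_k holds with v̄_k = 1 and u_k = z_0 x_k ∏_{i=k+1}^n x_i y_i^{-1}; more substantively, g_{k,ℓ}(q_ℓ) := (q_ℓ/(1 - y_k^{-1} q_ℓ)) ∏_{i=1}^{k-1} (1 + x_i^{-1} q_ℓ)/(1 - y_i^{-1} q_ℓ) satisfies g_{k,ℓ}(q_ℓ) = (-1)^{n-k+1} K(z; q_ℓ) · u_k · q_ℓ^{n+1} · f̃_{k,ℓ}(-q_ℓ^{-1}), where K(z;t) = 1/((1 - t z_0) ∏_{i=1}^n (1 - t x_i)(1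 - t y_i^{-1})) and f̃_{k,ℓ}(t) = t^{-n}(1 + z_0^{-1} t) ∏_{i=1}^n (1 + x_i^{-1} t) ∏_{i=1}^{k-1}(1 - x_i t) ∏_{i=k+1}^n (1 + y_i t). -/
/-!
Substituting `t = -q⁻¹` reverses every linear factor, `1 + a t = t a (1 + a⁻¹ t⁻¹)`.  Hence
`f̃_{k,ℓ}(-q⁻¹)` is, up to the monomial `(-1)^{n-k} q⁻ⁿ u_k⁻¹`, the product of the factors
`(1 - z₀ q) ∏ (1 - x_i q)` of `K(z;q)⁻¹` with the numerator `∏_{i<k} (1 + x_i⁻¹ q)` of `g` and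
the part `∏_{i>k} (1 - y_i⁻¹ q)` of `K(z;q)⁻¹` that is missing from the denominator of `g`.
Multiplying by `K(z;q)` therefore leaves exactly `g_{k,ℓ}(q)`.
-/

open Finset

theorem Finset.prod_Iio_mul_mul_prod_Ioi {α M : Type*} [CommMonoid M] [LinearOrder α] [Fintype α]
    [LocallyFiniteOrderBot α] [LocallyFiniteOrderTop α] (f : α → M) (a : α) :
    ∏ x, f x = (∏ x ∈ Iio a, f x) * f a * ∏ x ∈ Ioi a, f x := by
  classical
  rw [prod_Iio_mul_eq_prod_Iic, ← prod_mul_prod_compl (Iic a)]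
  congr 2
  ext x
  simp

theorem Finset.prod_one_add_mul_eq_pow_mul_prod_mul_prod_one_add_inv_mul {ι K : Type*} [Field K]
    (s : Finset ι) (a : ι → K) {t : K} (ha : ∀ i ∈ s, a i ≠ 0) (ht : t ≠ 0) :
    ∏ i ∈ s, (1 + a i * t) = t ^ #s * (∏ i ∈ s, a i) * ∏ i ∈ s, (1 + (a i)⁻¹ * t⁻¹) := by
  rw [← prod_const, ← prod_mul_distrib, ← prod_mul_distrib]
  refine prod_congr rfl fun i hi => ?_
  field_simp [ha i hi]
  ring

theorem Finset.prod_one_add_mul_neg_inv {ι K : Type*} [Field K]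
    (s : Finset ι) (a : ι → K) {q : K} (ha : ∀ i ∈ s, a i ≠ 0) (hq : q ≠ 0) :
    ∏ i ∈ s, (1 + a i * -q⁻¹) = (-q⁻¹) ^ #s * (∏ i ∈ s, a i) * ∏ i ∈ s, (1 - (a i)⁻¹ * q) := by
  rw [prod_one_add_mul_eq_pow_mul_prod_mul_prod_one_add_inv_mul s a ha (by simpa using hq)]
  simp only [inv_neg, inv_inv, mul_neg, ← sub_eq_add_neg]

section fTilde

variable {K : Type*} [Field K] {n : ℕ}

def fTilde (x y : Fin n → K) (z0 : K) (k : Fin n) (t : K) : K :=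
  t⁻¹ ^ n * (1 + z0⁻¹ * t) * (∏ i, (1 + (x i)⁻¹ * t)) * (∏ i ∈ Iio k, (1 - x i * t)) *
    ∏ i ∈ Ioi k, (1 + y i * t)

def uCoeff (x y : Fin n → K) (z0 : K) (k : Fin n) : K :=
  z0 * x k * ∏ i ∈ Ioi k, x i * (y i)⁻¹

theorem neg_one_pow_mul_fTilde_neg_inv (x y : Fin n → K) (z0 q : K) (k : Fin n)
    (hx : ∀ i, x i ≠ 0) (hy : ∀ i, y i ≠ 0) (hz0 : z0 ≠ 0) (hq : q ≠ 0) :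
    (-1) ^ (n - k) * fTilde x y z0 k (-q⁻¹) =
      q⁻¹ ^ n * (uCoeff x y z0 k)⁻¹ * ((1 - z0 * q) * (∏ i, (1 - x i * q)) *
        (∏ i ∈ Iio k, (1 + (x i)⁻¹ * q)) * ∏ i ∈ Ioi k, (1 - (y i)⁻¹ * q)) := by
  have hz : 1 + z0⁻¹ * -q⁻¹ = -q⁻¹ * z0⁻¹ * (1 - z0 * q) := by
    field_simp
    ring
  have hL : ∏ i ∈ Iio k, (1 - x i * -q⁻¹) =
      q⁻¹ ^ (k : ℕ) * (∏ i ∈ Iio k, x i) * ∏ i ∈ Iio k, (1 + (x i)⁻¹ * q) := by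
    simp only [mul_neg, sub_neg_eq_add]
    rw [prod_one_add_mul_eq_pow_mul_prod_mul_prod_one_add_inv_mul _ _ (fun i _ => hx i)
      (inv_ne_zero hq), inv_inv, Fin.card_Iio]
  -- the sign is absorbed by the `n - k` reversed factors `i > k` and `z₀`, each giving `-q⁻¹`
  have hpow : (-1) ^ (n - k) * (-q⁻¹) ^ (n - 1 - k) * -q⁻¹ * q⁻¹ ^ (k : ℕ) = q⁻¹ ^ n := by
    rw [mul_assoc _ _ (-q⁻¹), ← pow_succ, show n - 1 - k + 1 = n - k by omega, ← mul_pow,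
      neg_one_mul, neg_neg, ← pow_add, Nat.sub_add_cancel k.isLt.le]
  have hinv : (-q⁻¹)⁻¹ ^ n * (-q⁻¹) ^ n = 1 := by
    rw [← mul_pow, inv_mul_cancel₀ (by simpa using hq), one_pow]
  calc
    _ = ((-1) ^ (n - k) * (-q⁻¹) ^ (n - 1 - k) * -q⁻¹ * q⁻¹ ^ (k : ℕ)) *
          ((-q⁻¹)⁻¹ ^ n * (-q⁻¹) ^ n) *
          (z0⁻¹ * (∏ i, x i)⁻¹ * (∏ i ∈ Iio k, x i) * ∏ i ∈ Ioi k, y i) *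
          ((1 - z0 * q) * (∏ i, (1 - x i * q)) * (∏ i ∈ Iio k, (1 + (x i)⁻¹ * q)) *
            ∏ i ∈ Ioi k, (1 - (y i)⁻¹ * q)) := by
      rw [fTilde, hz, hL, prod_one_add_mul_neg_inv _ _ (fun i _ => inv_ne_zero (hx i)) hq,
        prod_one_add_mul_neg_inv _ _ (fun i _ => hy i) hq]
      simp only [inv_inv, card_univ, Fintype.card_fin, Fin.card_Ioi, prod_inv_distrib]
      ring
    _ = _ := by
      rw [hpow, hinv, mul_one, uCoeff]
      congr 2
      rw [prod_Iio_mul_mul_prod_Ioi (fun i => x i) k, prod_mul_distrib, prod_inv_distrib]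
      have hxL : ∏ i ∈ Iio k, x i ≠ 0 := prod_ne_zero_iff.2 fun i _ => hx i
      field_simp

end fTilde

theorem g_eq_sign_K_u_ftilde_general {K : Type*} [Field K] {n : ℕ}
    (x y : Fin n → K) (z0 q : K) (k : Fin n)
    (hx : ∀ i, x i ≠ 0) (hy : ∀ i, y i ≠ 0) (hz0 : z0 ≠ 0) (hqne : q ≠ 0)
    (hxq : ∀ i, 1 - x i * q ≠ 0) (hyq : ∀ i, 1 - (y i)⁻¹ * q ≠ 0)
    (hzq : 1 - z0 * q ≠ 0) :
    let u : K := z0 * x k * ∏ i ∈ Finset.univ.filter (fun i => k < i), (x i * (y i)⁻¹)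
    let Kq : K := ((1 - q * z0) * ∏ i : Fin n, ((1 - q * x i) * (1 - q * (y i)⁻¹)))⁻¹
    let ftilde : K → K := fun t =>
      t⁻¹ ^ n * (1 + z0⁻¹ * t) * (∏ i : Fin n, (1 + (x i)⁻¹ * t)) *
        (∏ i ∈ Finset.univ.filter (fun i => i < k), (1 - x i * t)) *
        (∏ i ∈ Finset.univ.filter (fun i => k < i), (1 + y i * t))
    q / (1 - (y k)⁻¹ * q) *
        (∏ i ∈ Finset.univ.filter (fun i => i < k), ((1 + (x i)⁻¹ * q) / (1 - (y i)⁻¹ * q))) =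
      (-1 : K) ^ (n - (k : ℕ)) * Kq * u * q ^ (n + 1) * ftilde (-q⁻¹) := by
  intro u Kq ftilde
  simp only [filter_gt_eq_Iio, prod_div_distrib]
  set A := 1 - z0 * q
  set P := ∏ i, (1 - x i * q)
  set NL := ∏ i ∈ Iio k, (1 + (x i)⁻¹ * q)
  set DL := ∏ i ∈ Iio k, (1 - (y i)⁻¹ * q)
  set Dk := 1 - (y k)⁻¹ * q
  set DR := ∏ i ∈ Ioi k, (1 - (y i)⁻¹ * q)
  have hF : (-1) ^ (n - k) * ftilde (-q⁻¹) = q⁻¹ ^ n * u⁻¹ * (A * P * NL * DR) := by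
    simp only [ftilde, u, filter_gt_eq_Iio, filter_lt_eq_Ioi]
    exact neg_one_pow_mul_fTilde_neg_inv x y z0 q k hx hy hz0 hqne
  have hKq : Kq = (A * P * (DL * Dk * DR))⁻¹ := by
    simp only [Kq, A, P, DL, Dk, DR]
    rw [← prod_Iio_mul_mul_prod_Ioi (fun i => 1 - (y i)⁻¹ * q), mul_assoc, ← prod_mul_distrib]
    congr 2
    · ring
    · exact prod_congr rfl fun i _ => by ring
  have hu : u ≠ 0 := mul_ne_zero (mul_ne_zero hz0 (hx k))
    (prod_ne_zero_iff.2 fun i _ => mul_ne_zero (hx i) (inv_ne_zero (hy i)))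
  have hP : P ≠ 0 := prod_ne_zero_iff.2 fun i _ => hxq i
  have hDL : DL ≠ 0 := prod_ne_zero_iff.2 fun i _ => hyq i
  have hDR : DR ≠ 0 := prod_ne_zero_iff.2 fun i _ => hyq i
  have hDk : Dk ≠ 0 := hyq k
  calc
    _ = Kq * u * q ^ (n + 1) * (q⁻¹ ^ n * u⁻¹ * (A * P * NL * DR)) := by
      rw [hKq, inv_pow]
      field_simp
      ring
    _ = _ := by
      rw [← hF]
      ring

/-- With `u_k = z₀ x_k ∏_{i=k+1}^n x_i y_i⁻¹` (and `v̄_k = 1`), the identity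
`g_{k,ℓ}(q) = (-1)^{n-k+1} K(z;q) · u_k · q^{n+1} · f̃_{k,ℓ}(-q⁻¹)` holds.
Indices are 0-indexed: `k : Fin n` has 1-indexed value `k+1`, so the sign
`(-1)^{n-k+1}` becomes `(-1)^{n-k}` with the 0-indexed `k`, `∏_{i=1}^{k-1}` is over
`i < k` and `∏_{i=k+1}^n` over `k < i`.  The hypotheses make all denominators nonzero. -/
theorem g_eq_sign_K_u_ftilde {K : Type*} [Field K] {n : ℕ} (hn : 1 ≤ n)
    (x y : Fin n → K) (z0 q : K) (k : Fin n)
    (hx : ∀ i, x i ≠ 0) (hy : ∀ i, y i ≠ 0) (hz0 : z0 ≠ 0) (hqne : q ≠ 0)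
    (hxq : ∀ i, 1 - x i * q ≠ 0) (hyq : ∀ i, 1 - (y i)⁻¹ * q ≠ 0)
    (hzq : 1 - z0 * q ≠ 0) :
    let u : K := z0 * x k * ∏ i ∈ Finset.univ.filter (fun i => k < i), (x i * (y i)⁻¹)
    let Kq : K := ((1 - q * z0) * ∏ i : Fin n, ((1 - q * x i) * (1 - q * (y i)⁻¹)))⁻¹
    let ftilde : K → K := fun t =>
      t⁻¹ ^ n * (1 + z0⁻¹ * t) * (∏ i : Fin n, (1 + (x i)⁻¹ * t)) *
        (∏ i ∈ Finset.univ.filter (fun i => i < k), (1 - x i * t)) *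
        (∏ i ∈ Finset.univ.filter (fun i => k < i), (1 + y i * t))
    q / (1 - (y k)⁻¹ * q) *
        (∏ i ∈ Finset.univ.filter (fun i => i < k), ((1 + (x i)⁻¹ * q) / (1 - (y i)⁻¹ * q))) =
      (-1 : K) ^ (n - (k : ℕ)) * Kq * u * q ^ (n + 1) * ftilde (-q⁻¹) :=
  g_eq_sign_K_u_ftilde_general x y z0 q k hx hy hz0 hqne hxq hyq hzq
end

section
/- Let A be the n×n matrix over a commutative ring whose (k,ℓ) entry is Σ_{r=0}^{k-ℓ} (-1)^r e_{k-ℓ-r}(c) h_r^{(ℓ)} + (-1)^{ℓ-1} Σ_{r=0}^{n+1-k-ℓ} e_{k+ℓ+r}(c) h_r^{(ℓ)}, where h_r^{(ℓ)} = h_r(q_1, -q_1^{-1}, ..., q_ℓ, -q_ℓ^{-1}) is the complete homogeneous symmetric polynomial of degree r in the 2ℓ variables q_1, -q_1^{-1}, ..., q_ℓ, -q_ℓ^{-1}. Then det(A) = det_{1≤k,ℓ≤n}( e_{k-ℓ}(c) + (-1)^{ℓ-1} e_{k+ℓ}(c) ); in particular det(A) is independent of q_1,...,q_n. -/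
open Finset

lemma epoly_eq_zero {σ : Type*} [Fintype σ] [DecidableEq σ] {R : Type*} [CommRing R]
    (x : σ → R) {r : ℕ} (h : Fintype.card σ < r) : epoly x r = 0 := by
  unfold epoly
  rw [Finset.powersetCard_eq_empty.mpr (by simpa using h), Finset.sum_empty]

lemma hpoly_zero {σ : Type*} [Fintype σ] [DecidableEq σ] {R : Type*} [CommRing R]
    (x : σ → R) : hpoly x 0 = 1 := by
  unfold hpoly
  haveI : Unique (Fin (0 + 1)) := inferInstanceAs (Unique (Fin 1))
  rw [Finset.filter_true_of_mem (fun d _ => by simp [Fin.fin_one_eq_zero])]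
  rw [Finset.univ_unique, Finset.sum_singleton]
  simp

/-- The determinant of the matrix with entries
`Σ_{r=0}^{k-ℓ} (-1)^r e_{k-ℓ-r}(c) h_r^{(ℓ)} + (-1)^{ℓ-1} Σ_{r=0}^{n+1-k-ℓ} e_{k+ℓ+r}(c) h_r^{(ℓ)}`,
where `h_r^{(ℓ)} = h_r(q_1, -q_1⁻¹, …, q_ℓ, -q_ℓ⁻¹)`, equals
`det( e_{k-ℓ}(c) + (-1)^{ℓ-1} e_{k+ℓ}(c) )`; in particular it is independent of `q`.
Rows/columns are 0-indexed: `k, ℓ : Fin n` have 1-indexed values `k+1, ℓ+1`. -/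
theorem det_eh_independent_of_q {K : Type*} [Field K] {n : ℕ} (hn : 1 ≤ n)
    (q : Fin n → K) (hq : ∀ i, q i ≠ 0) (c : Fin (n + 1) → K) :
    Matrix.det (Matrix.of fun k l : Fin n =>
        (if (l : ℕ) ≤ (k : ℕ) then
          ∑ r ∈ Finset.range ((k : ℕ) - (l : ℕ) + 1),
            (-1 : K) ^ r * epoly c ((k : ℕ) - (l : ℕ) - r) *
              hpoly (Sum.elim (fun i : Fin ((l : ℕ) + 1) => q (Fin.castLE l.isLt i))
                (fun i : Fin ((l : ℕ) + 1) => -(q (Fin.castLE l.isLt i))⁻¹)) r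
        else 0) +
        (-1 : K) ^ (l : ℕ) *
          ∑ r ∈ Finset.range (n + 1 - ((k : ℕ) + 1) - ((l : ℕ) + 1) + 1),
            epoly c ((k : ℕ) + (l : ℕ) + 2 + r) *
              hpoly (Sum.elim (fun i : Fin ((l : ℕ) + 1) => q (Fin.castLE l.isLt i))
                (fun i : Fin ((l : ℕ) + 1) => -(q (Fin.castLE l.isLt i))⁻¹)) r) =
      Matrix.det (Matrix.of fun k l : Fin n =>
        epolyZ c ((k : ℤ) - (l : ℕ)) + (-1 : K) ^ (l : ℕ) * epoly c ((k : ℕ) + (l : ℕ) + 2)) := by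
  classical
  set H : Fin n → ℕ → K := fun l r =>
    hpoly (Sum.elim (fun i : Fin ((l : ℕ) + 1) => q (Fin.castLE l.isLt i))
      (fun i : Fin ((l : ℕ) + 1) => -(q (Fin.castLE l.isLt i))⁻¹)) r with hH
  set B : Matrix (Fin n) (Fin n) K := Matrix.of fun k l : Fin n =>
    epolyZ c ((k : ℤ) - (l : ℕ)) + (-1 : K) ^ (l : ℕ) * epoly c ((k : ℕ) + (l : ℕ) + 2) with hB
  set M : Matrix (Fin n) (Fin n) K := Matrix.of fun j l : Fin n =>
    if (l : ℕ) ≤ (j : ℕ) then (-1 : K) ^ ((j : ℕ) - (l : ℕ)) * H l ((j : ℕ) - (l : ℕ)) else 0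
    with hM
  have hMtri : M.BlockTriangular OrderDual.toDual := by
    intro j l h
    have hjl : (j : ℕ) < (l : ℕ) := h
    simp only [hM, Matrix.of_apply]
    rw [if_neg (by omega)]
  have hMdiag : ∀ i, M i i = 1 := by
    intro i
    simp only [hM, Matrix.of_apply, le_refl, if_true, Nat.sub_self, pow_zero, one_mul, hH]
    exact hpoly_zero _
  have ecard : Fintype.card (Fin (n + 1)) = n + 1 := by simp
  have key : (Matrix.of fun k l : Fin n =>
        (if (l : ℕ) ≤ (k : ℕ) then
          ∑ r ∈ Finset.range ((k : ℕ) - (l : ℕ) + 1),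
            (-1 : K) ^ r * epoly c ((k : ℕ) - (l : ℕ) - r) * H l r
        else 0) +
        (-1 : K) ^ (l : ℕ) *
          ∑ r ∈ Finset.range (n + 1 - ((k : ℕ) + 1) - ((l : ℕ) + 1) + 1),
            epoly c ((k : ℕ) + (l : ℕ) + 2 + r) * H l r) = B * M := by
    ext k l
    simp only [Matrix.of_apply]
    rw [Matrix.mul_apply]
    have step1 : ∑ j : Fin n, B k j * M j l
        = ∑ j ∈ Finset.range n, (if (l : ℕ) ≤ j then
            (epolyZ c ((k : ℤ) - (j : ℕ)) + (-1 : K) ^ (j : ℕ) * epoly c ((k : ℕ) + j + 2)) *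
              ((-1 : K) ^ (j - (l : ℕ)) * H l (j - (l : ℕ))) else 0) := by
      rw [← Fin.sum_univ_eq_sum_range]
      refine Finset.sum_congr rfl fun j _ => ?_
      simp only [hB, hM, Matrix.of_apply, mul_ite, mul_zero]
    rw [step1]
    have step2 : ∑ j ∈ Finset.range n, (if (l : ℕ) ≤ j then
            (epolyZ c ((k : ℤ) - (j : ℕ)) + (-1 : K) ^ (j : ℕ) * epoly c ((k : ℕ) + j + 2)) *
              ((-1 : K) ^ (j - (l : ℕ)) * H l (j - (l : ℕ))) else 0)
        = ∑ r ∈ Finset.range (n - (l : ℕ)),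
            (epolyZ c ((k : ℤ) - ((l : ℕ) + r)) +
              (-1 : K) ^ ((l : ℕ) + r) * epoly c ((k : ℕ) + ((l : ℕ) + r) + 2)) *
              ((-1 : K) ^ r * H l r) := by
      rw [← Finset.sum_filter]
      have hfil : (Finset.range n).filter (fun j => (l : ℕ) ≤ j) = Finset.Ico (l : ℕ) n := by
        ext j
        simp [Finset.mem_filter, Finset.mem_Ico, Finset.mem_range, and_comm]
      rw [hfil, Finset.sum_Ico_eq_sum_range]
      refine Finset.sum_congr rfl fun r _ => ?_
      rw [Nat.add_sub_cancel_left]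
      norm_num
    rw [step2]
    have split : ∀ r ∈ Finset.range (n - (l : ℕ)),
        (epolyZ c ((k : ℤ) - ((l : ℕ) + r)) +
          (-1 : K) ^ ((l : ℕ) + r) * epoly c ((k : ℕ) + ((l : ℕ) + r) + 2)) *
          ((-1 : K) ^ r * H l r)
        = epolyZ c ((k : ℤ) - ((l : ℕ) + r)) * ((-1 : K) ^ r * H l r) +
          (-1 : K) ^ (l : ℕ) * (epoly c ((k : ℕ) + (l : ℕ) + 2 + r) * H l r) := by
      intro r _
      have hsign : (-1 : K) ^ ((l : ℕ) + r) * (-1 : K) ^ r = (-1 : K) ^ (l : ℕ) := by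
        rw [pow_add, mul_assoc, ← pow_add, ← two_mul, pow_mul]
        simp
      have harg : (k : ℕ) + ((l : ℕ) + r) + 2 = (k : ℕ) + (l : ℕ) + 2 + r := by omega
      rw [harg, add_mul, ← hsign]
      ring
    rw [Finset.sum_congr rfl split, Finset.sum_add_distrib, ← Finset.mul_sum]
    congr 1
    · -- first part
      by_cases hlk : (l : ℕ) ≤ (k : ℕ)
      · rw [if_pos hlk]
        have hsub : Finset.range ((k : ℕ) - (l : ℕ) + 1) ⊆ Finset.range (n - (l : ℕ)) :=
          Finset.range_subset_range.mpr (by have := k.isLt; omega)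
        have hzero : ∀ r ∈ Finset.range (n - (l : ℕ)), r ∉ Finset.range ((k : ℕ) - (l : ℕ) + 1) →
            epolyZ c ((k : ℤ) - ((l : ℕ) + r)) * ((-1 : K) ^ r * H l r) = 0 := by
          intro r _ hr
          have hr' : (k : ℕ) - (l : ℕ) + 1 ≤ r := by
            by_contra hc
            exact hr (Finset.mem_range.mpr (by omega))
          unfold epolyZ
          rw [if_neg (by omega), zero_mul]
        rw [← Finset.sum_subset hsub hzero]
        refine Finset.sum_congr rfl fun r hr => ?_
        have hr' : r ≤ (k : ℕ) - (l : ℕ) := by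
          simpa [Nat.lt_succ_iff] using Finset.mem_range.mp hr
        have hz : epolyZ c ((k : ℤ) - ((l : ℕ) + r)) = epoly c ((k : ℕ) - (l : ℕ) - r) := by
          unfold epolyZ
          rw [if_pos (by omega)]
          congr 1
          omega
        rw [hz]; ring
      · rw [if_neg hlk]
        refine (Finset.sum_eq_zero fun r _ => ?_).symm
        unfold epolyZ
        rw [if_neg (by omega), zero_mul]
    · -- second part
      congr 1
      have hsub : Finset.range (n + 1 - ((k : ℕ) + 1) - ((l : ℕ) + 1) + 1)
          ⊆ Finset.range (n - (l : ℕ)) :=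
        Finset.range_subset_range.mpr (by have := k.isLt; have := l.isLt; omega)
      have hzero : ∀ r ∈ Finset.range (n - (l : ℕ)),
          r ∉ Finset.range (n + 1 - ((k : ℕ) + 1) - ((l : ℕ) + 1) + 1) →
          epoly c ((k : ℕ) + (l : ℕ) + 2 + r) * H l r = 0 := by
        intro r _ hr
        have hr' : n + 1 - ((k : ℕ) + 1) - ((l : ℕ) + 1) + 1 ≤ r := by
          by_contra hc
          exact hr (Finset.mem_range.mpr (by omega))
        rw [epoly_eq_zero c (by rw [ecard]; have := k.isLt; omega), zero_mul]
      rw [← Finset.sum_subset hsub hzero]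
  rw [show (Matrix.of fun k l : Fin n =>
        (if (l : ℕ) ≤ (k : ℕ) then
          ∑ r ∈ Finset.range ((k : ℕ) - (l : ℕ) + 1),
            (-1 : K) ^ r * epoly c ((k : ℕ) - (l : ℕ) - r) *
              hpoly (Sum.elim (fun i : Fin ((l : ℕ) + 1) => q (Fin.castLE l.isLt i))
                (fun i : Fin ((l : ℕ) + 1) => -(q (Fin.castLE l.isLt i))⁻¹)) r
        else 0) +
        (-1 : K) ^ (l : ℕ) *
          ∑ r ∈ Finset.range (n + 1 - ((k : ℕ) + 1) - ((l : ℕ) + 1) + 1),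
            epoly c ((k : ℕ) + (l : ℕ) + 2 + r) *
              hpoly (Sum.elim (fun i : Fin ((l : ℕ) + 1) => q (Fin.castLE l.isLt i))
                (fun i : Fin ((l : ℕ) + 1) => -(q (Fin.castLE l.isLt i))⁻¹)) r) = B * M from key,
    Matrix.det_mul, Matrix.det_of_lowerTriangular M hMtri]
  simp [hMdiag]
end
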